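/- Let n ≥ 1 and let Ω ⊆ 𝕆_sⁿ be slice-open. Then for every q ∈ Ω there exists a real-connected slice-domain V with q ∈ V ⊆ Ω. -/
import Mathlib


/-! Octonions via the Cayley–Dickson construction on the quaternions,
the n-dimensional quadratic cone, the slice topology, and slice regularity. -/

noncomputable section
open Quaternion Topology

/-- The octonions, as `ℍ × ℍ` with the (L²) Euclidean norm and
Cayley–Dickson multiplication. -/
abbrev Oct : Type := WithLp 2 (ℍ × ℍ)

namespace Oct

def c1 (p : Oct) : ℍ := (WithLp.equiv 2 (ℍ × ℍ) p).1
def c2 (p : Oct) : ℍ := (WithLp.equiv 2 (ℍ × ℍ) p).2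
def mk (a b : ℍ) : Oct := (WithLp.equiv 2 (ℍ × ℍ)).symm (a, b)

instance : One Oct := ⟨mk 1 0⟩

/-- Cayley–Dickson multiplication. -/
instance : Mul Oct :=
  ⟨fun p q => mk (c1 p * c1 q - star (c2 q) * c2 p) (c2 q * c1 p + c2 p * star (c1 q))⟩

/-- Octonionic conjugation. -/
instance : Star Oct := ⟨fun p => mk (star (c1 p)) (-(c2 p))⟩

/-- Inverse: `p⁻¹ = ‖p‖⁻² • (star p)` (so `0⁻¹ = 0`). -/
instance : Inv Oct := ⟨fun p => (‖p‖ ^ 2)⁻¹ • star p⟩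

/-- The real inner product on `𝕆 ≅ ℝ⁸`, via polarization. -/
def oinner (p q : Oct) : ℝ := (1 / 4) * (‖p + q‖ ^ 2 - ‖p - q‖ ^ 2)

/-- The sphere `𝕊` of imaginary units of the octonions. -/
def Sph : Set Oct := {I | I * I = -1}

/-- The slice complex plane `ℂ_I = ℝ + ℝ I ⊆ 𝕆`. -/
def CI (I : Oct) : Set Oct := {z | ∃ s t : ℝ, z = s • (1 : Oct) + t • I}

end Oct

open Oct

/-- The point `x + y I ∈ ℂ_Iⁿ ⊆ 𝕆ⁿ`. -/
def aff {n : ℕ} (x y : Fin n → ℝ) (I : Oct) : Fin n → Oct :=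
  fun m => x m • (1 : Oct) + y m • I

/-- The embedding `ℝⁿ ⊆ 𝕆ⁿ`. -/
def ofRealn {n : ℕ} (x : Fin n → ℝ) : Fin n → Oct := fun m => x m • (1 : Oct)

/-- The slice `ℂ_Iⁿ ⊆ 𝕆ⁿ`. -/
def slicen (n : ℕ) (I : Oct) : Set (Fin n → Oct) := {q | ∃ x y : Fin n → ℝ, q = aff x y I}

/-- The `n`-dimensional quadratic cone `𝕆ₛⁿ = ⋃_{I ∈ 𝕊} ℂ_Iⁿ`. -/
def cone (n : ℕ) : Set (Fin n → Oct) := ⋃ I ∈ Sph, slicen n I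

/-- The slice topology `τ_s`: a set is open iff its trace on every slice `ℂ_Iⁿ`
is open (expressed via the canonical parametrizations `(x,y) ↦ x + yI`). -/
def τs (n : ℕ) : TopologicalSpace (Fin n → Oct) :=
  ⨆ I : Sph, TopologicalSpace.coinduced
    (fun p : (Fin n → ℝ) × (Fin n → ℝ) => aff p.1 p.2 I.1) inferInstance

/-- A slice-open subset of the quadratic cone. -/
def SliceOpen (n : ℕ) (Ω : Set (Fin n → Oct)) : Prop :=
  Ω ⊆ cone n ∧ IsOpen[τs n] Ω

/-- A slice-domain: a nonempty slice-connected slice-open subset of the cone. -/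
def SliceDomain (n : ℕ) (Ω : Set (Fin n → Oct)) : Prop :=
  SliceOpen n Ω ∧ @IsConnected _ (τs n) Ω

/-- Real-connectedness: `Ω ∩ ℝⁿ` is a (pre)connected subset of `ℝⁿ`. -/
def RealConnected (n : ℕ) (Ω : Set (Fin n → Oct)) : Prop :=
  IsPreconnected {x : Fin n → ℝ | ofRealn x ∈ Ω}

/-- Axially symmetric subsets of the cone. -/
def AxSymm (n : ℕ) (Ω : Set (Fin n → Oct)) : Prop :=
  ∀ (x y : Fin n → ℝ), ∀ I ∈ Sph, ∀ J ∈ Sph, aff x y I ∈ Ω → aff x y J ∈ Ω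

/-- The upper half-space `ℝ²ⁿ₊`: pairs `(x,y)` with `y = 0` or the first
nonzero coordinate of `y` positive. -/
def pos2n (n : ℕ) : Set ((Fin n → ℝ) × (Fin n → ℝ)) :=
  {p | p.2 = 0 ∨ ∃ m : Fin n, 0 < p.2 m ∧ ∀ k : Fin n, k < m → p.2 k = 0}

/-- `Ω_{s₁}`. -/
def s1 {n : ℕ} (Ω : Set (Fin n → Oct)) : Set ((Fin n → ℝ) × (Fin n → ℝ)) :=
  {p | ∃ I ∈ Sph, aff p.1 p.2 I ∈ Ω}

/-- `Ω_{s₂}`. -/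
def s2 {n : ℕ} (Ω : Set (Fin n → Oct)) : Set ((Fin n → ℝ) × (Fin n → ℝ)) :=
  {p | ∃ J ∈ Sph, ∃ K ∈ Sph, J ≠ K ∧ aff p.1 p.2 J ∈ Ω ∧ aff p.1 p.2 K ∈ Ω}

/-- Slice functions: induced on `Ω_{s₂}⁺` by a pair `(F₁, F₂)` via
`f(x + yI) = F₁(x,y) + I·F₂(x,y)`. -/
def IsSliceFun (n : ℕ) (Ω : Set (Fin n → Oct)) (f : (Fin n → Oct) → Oct) : Prop :=
  ∃ F₁ F₂ : (Fin n → ℝ) × (Fin n → ℝ) → Oct,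
    ∀ x y : Fin n → ℝ, (x, y) ∈ s2 Ω ∩ pos2n n → ∀ I ∈ Sph, aff x y I ∈ Ω →
      f (aff x y I) = F₁ (x, y) + I * F₂ (x, y)

/-- Holomorphy of a function of `n` slice variables, read through the
parametrization `(x,y) ↦ x + yI`: continuous partial derivatives (i.e. `C¹`)
and the Cauchy–Riemann equations `(∂/∂xₘ + I ∂/∂yₘ) g = 0` on `U`. -/
def Holo (n : ℕ) (I : Oct) (g : (Fin n → ℝ) × (Fin n → ℝ) → Oct)
    (U : Set ((Fin n → ℝ) × (Fin n → ℝ))) : Prop :=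
  ContDiffOn ℝ 1 g U ∧
  ∀ p ∈ U, ∀ m : Fin n,
    fderiv ℝ g p (Pi.single m 1, 0) + I * fderiv ℝ g p (0, Pi.single m 1) = 0

/-- Weak slice regularity: each restriction `f|_{Ω ∩ ℂ_Iⁿ}` is holomorphic. -/
def WSliceReg (n : ℕ) (Ω : Set (Fin n → Oct)) (f : (Fin n → Oct) → Oct) : Prop :=
  ∀ I ∈ Sph, Holo n I (fun p => f (aff p.1 p.2 I)) {p | aff p.1 p.2 I ∈ Ω}

/-- The complex structure `σ(a,b) = (−b,a)` on `𝕆²`. -/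
def sigma2 : Oct × Oct → Oct × Oct := fun w => (-w.2, w.1)

/-- Holomorphic stem maps: `F : V → 𝕆²` extends to a `C¹` map `G` on an open
neighborhood `U ⊇ V` satisfying `(∂/∂xₘ + σ ∂/∂yₘ) G = 0` on `U`. -/
def StemHolo (n : ℕ) (V : Set ((Fin n → ℝ) × (Fin n → ℝ)))
    (F : (Fin n → ℝ) × (Fin n → ℝ) → Oct × Oct) : Prop :=
  ∃ (U : Set ((Fin n → ℝ) × (Fin n → ℝ))) (G : (Fin n → ℝ) × (Fin n → ℝ) → Oct × Oct),
    IsOpen U ∧ V ⊆ U ∧ Set.EqOn G F V ∧ ContDiffOn ℝ 1 G U ∧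
    ∀ p ∈ U, ∀ m : Fin n,
      fderiv ℝ G p (Pi.single m 1, 0) + sigma2 (fderiv ℝ G p (0, Pi.single m 1)) = 0

/-- Strong slice regularity: `f` is induced by a holomorphic stem map on `Ω_{s₁}`. -/
def SSliceReg (n : ℕ) (Ω : Set (Fin n → Oct)) (f : (Fin n → Oct) → Oct) : Prop :=
  ∃ F : (Fin n → ℝ) × (Fin n → ℝ) → Oct × Oct, StemHolo n (s1 Ω) F ∧
    ∀ x y : Fin n → ℝ, ∀ I ∈ Sph, aff x y I ∈ Ω →
      f (aff x y I) = (F (x, y)).1 + I * (F (x, y)).2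

/-- An s-basis `{I, J, K}` of the octonions. -/
def IsSBasis (I J K : Oct) : Prop :=
  I ∈ Sph ∧ J ∈ Sph ∧ K ∈ Sph ∧
  LinearIndependent ℝ ![(1 : Oct), I, J, I * J, K, J * K, I * K, (I * J) * K] ∧
  Submodule.span ℝ (Set.range ![(1 : Oct), I, J, I * J, K, J * K, I * K, (I * J) * K]) = ⊤

/-- Iterated left multiplication `L_w^β = (L_{w₁})^{β₁} ∘ ⋯ ∘ (L_{wₙ})^{βₙ}`. -/
def Lpow {n : ℕ} (w : Fin n → Oct) (β : Fin n → ℕ) : Oct → Oct :=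
  fun a => (List.finRange n).foldr (fun ℓ c => (fun o => w ℓ * o)^[β ℓ] c) a

/-- The `*`-power `(q − p)^{*α} a = ∑_{β ≤ α} C(α,β) L_q^β (L_{−p}^{α−β} a)`. -/
def starPow {n : ℕ} (p : Fin n → Oct) (α : Fin n → ℕ) (a : Oct) (q : Fin n → Oct) : Oct :=
  ∑ β ∈ Finset.Iic α, (∏ ℓ, (α ℓ).choose (β ℓ)) • Lpow q β (Lpow (-p) (α - β) a)

/-- The `ℓ`-th slice derivative `∂_ℓ f (x + w) = (∂/∂x_ℓ) f (x + w)`. -/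
def sderiv {n : ℕ} (ℓ : Fin n) (f : (Fin n → Oct) → Oct) : (Fin n → Oct) → Oct :=
  fun q => deriv (fun t : ℝ => f (fun m => q m + (if m = ℓ then t else 0) • (1 : Oct))) 0

/-- The iterated slice derivative `f^{(α)} = (∂₁)^{α₁} ⋯ (∂ₙ)^{αₙ} f`. -/
def sderivMulti {n : ℕ} (α : Fin n → ℕ) (f : (Fin n → Oct) → Oct) : (Fin n → Oct) → Oct :=
  (List.finRange n).foldr (fun ℓ g => (sderiv ℓ)^[α ℓ] g) f

/-- The slice-polydisc `P̃(q₀, r)` (relative to `I ∈ 𝕊` with `q₀ ∈ ℂ_Iⁿ`):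
points `x + yJ` with `x ± yI` in the closed polydisc `P_I(q₀, r)`. -/
def polyDisc {n : ℕ} (q₀ : Fin n → Oct) (I : Oct) (r : Fin n → ℝ) : Set (Fin n → Oct) :=
  {q | ∃ x y : Fin n → ℝ, ∃ J ∈ Sph, q = aff x y J ∧
        (∀ ℓ, ‖aff x y I ℓ - q₀ ℓ‖ ≤ r ℓ) ∧ (∀ ℓ, ‖aff x (-y) I ℓ - q₀ ℓ‖ ≤ r ℓ)}

namespace OctAux

open Oct

lemma oct_ext {p q : Oct} (h1 : c1 p = c1 q) (h2 : c2 p = c2 q) : p = q := by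
  have : (c1 p, c2 p) = (c1 q, c2 q) := by rw [h1, h2]
  exact (WithLp.equiv 2 (ℍ × ℍ)).injective this

lemma c1_mul (p q : Oct) : c1 (p*q) = c1 p * c1 q - star (c2 q) * c2 p := rfl
lemma c2_mul (p q : Oct) : c2 (p*q) = c2 q * c1 p + c2 p * star (c1 q) := rfl
lemma c1_smul (s : ℝ) (p : Oct) : c1 (s • p) = s • c1 p := rfl
lemma c2_smul (s : ℝ) (p : Oct) : c2 (s • p) = s • c2 p := rfl
lemma c1_one : c1 (1:Oct) = 1 := rfl
lemma c2_one : c2 (1:Oct) = 0 := rfl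
lemma c1_neg (p : Oct) : c1 (-p) = -c1 p := rfl
lemma c2_neg (p : Oct) : c2 (-p) = -c2 p := rfl
lemma c1_zero : c1 (0:Oct) = 0 := rfl
lemma c2_zero : c2 (0:Oct) = 0 := rfl

lemma one_ne_zero' : (1:Oct) ≠ 0 := by
  intro h
  have : c1 (1:Oct) = c1 0 := by rw [h]
  rw [c1_one, c1_zero] at this
  exact one_ne_zero this

lemma smul_mul' (s : ℝ) (p q : Oct) : (s • p) * q = s • (p * q) := by
  refine oct_ext ?_ ?_
  · rw [c1_mul, c1_smul, c1_smul, c1_mul, c2_smul]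
    rw [smul_mul_assoc, mul_smul_comm, smul_sub]
  · rw [c2_mul, c2_smul, c1_smul, c2_smul, c2_mul]
    rw [mul_smul_comm, smul_mul_assoc, smul_add]

lemma mul_smul' (s : ℝ) (p q : Oct) : p * (s • q) = s • (p * q) := by
  refine oct_ext ?_ ?_
  · rw [c1_mul, c1_smul, c1_smul, c2_smul, c1_mul]
    rw [Quaternion.star_smul, mul_smul_comm, smul_mul_assoc, smul_sub]
  · rw [c2_mul, c2_smul, c1_smul, c2_smul, c2_mul]
    rw [Quaternion.star_smul, smul_mul_assoc, mul_smul_comm, smul_add]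

lemma quat_re_of_sq {a : ℍ} (h : a * a = -1) : a.re = 0 := by
  have hre : (a*a).re = (-1:ℍ).re := by rw [h]
  have hi : (a*a).imI = (-1:ℍ).imI := by rw [h]
  have hj : (a*a).imJ = (-1:ℍ).imJ := by rw [h]
  have hk : (a*a).imK = (-1:ℍ).imK := by rw [h]
  simp [Quaternion.re_mul, Quaternion.imI_mul, Quaternion.imJ_mul,
    Quaternion.imK_mul] at hre hi hj hk
  nlinarith [sq_nonneg a.re, sq_nonneg a.imI, sq_nonneg a.imJ, sq_nonneg a.imK]

lemma sph_re {I : Oct} (hI : I ∈ Sph) : (c1 I).re = 0 := by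
  have h1 : c1 (I * I) = c1 (-1 : Oct) := by rw [hI]
  have h2 : c2 (I * I) = c2 (-1 : Oct) := by rw [hI]
  rw [c1_mul, c1_neg, c1_one] at h1
  rw [c2_mul, c2_neg, c2_one, neg_zero] at h2
  set a := c1 I
  set b := c2 I
  have h2' : b * (a + star a) = 0 := by rw [mul_add]; exact h2
  rw [Quaternion.self_add_star'] at h2'
  rcases mul_eq_zero.mp h2' with hb | hre
  · rw [hb] at h1
    simp at h1
    exact quat_re_of_sq h1
  · have : ((2 * a.re : ℝ) : ℍ) = ((0:ℝ):ℍ) := by rw [hre]; simp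
    have := Quaternion.coe_injective this
    linarith

lemma sph_ne_zero {I : Oct} (hI : I ∈ Sph) : I ≠ 0 := by
  intro h
  rw [h] at hI
  have : c1 ((0:Oct) * 0) = c1 (-1:Oct) := by rw [hI]
  rw [c1_mul, c1_zero, c2_zero, c1_neg, c1_one] at this
  simp at this

lemma sph_neg {I : Oct} (hI : I ∈ Sph) : -I ∈ Sph := by
  have : (-I) * (-I) = I * I := by
    rw [← neg_one_smul ℝ I, smul_mul', mul_smul', smul_smul]
    norm_num
  simpa [Sph, this] using hI

lemma lin2 {I : Oct} (hI : I ∈ Sph) {a b : ℝ} (h : a • (1:Oct) + b • I = 0) :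
    a = 0 ∧ b = 0 := by
  have hre : (c1 (a • (1:Oct) + b • I)).re = (c1 (0:Oct)).re := by rw [h]
  have : c1 (a • (1:Oct) + b • I) = a • c1 (1:Oct) + b • c1 I := rfl
  rw [this, c1_zero] at hre
  simp [Quaternion.re_smul, c1_one, sph_re hI] at hre
  subst hre
  simp at h
  rcases h with h' | h'
  · exact ⟨rfl, h'⟩
  · exact absurd h' (sph_ne_zero hI)

lemma sph_smul_eq {I J : Oct} (hI : I ∈ Sph) (hJ : J ∈ Sph) {t : ℝ} (h : J = t • I) :
    J = I ∨ J = -I := by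
  have hJJ : J * J = -1 := hJ
  rw [h, smul_mul', mul_smul', smul_smul, hI] at hJJ
  have h1 : (t * t) • (-1 : Oct) - (1:ℝ) • (-1 : Oct) = 0 := by
    rw [one_smul, hJJ, sub_self]
  rw [← sub_smul] at h1
  have hne : (-1 : Oct) ≠ 0 := by
    intro hc
    exact one_ne_zero' (by rw [← neg_neg (1:Oct), hc, neg_zero])
  rcases smul_eq_zero.mp h1 with ht | hc
  · have ht' : t * t = 1 := by
      have := sub_eq_zero.mp (by linarith [ht] : t*t - 1 = 0)
      linarith
    rcases mul_self_eq_one_iff.mp ht' with rfl | rfl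
    · left; rw [h, one_smul]
    · right; rw [h, neg_one_smul]
  · exact absurd hc hne

lemma lin3 {I J : Oct} (hI : I ∈ Sph) (hJ : J ∈ Sph) (h1 : J ≠ I) (h2 : J ≠ -I)
    {a b c : ℝ} (h : a • (1:Oct) + b • I + c • J = 0) : a = 0 ∧ b = 0 ∧ c = 0 := by
  have hre : (c1 (a • (1:Oct) + b • I + c • J)).re = (c1 (0:Oct)).re := by rw [h]
  have he : c1 (a • (1:Oct) + b • I + c • J) = a • c1 (1:Oct) + b • c1 I + c • c1 J := rfl
  rw [he, c1_zero] at hre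
  simp [Quaternion.re_smul, c1_one, sph_re hI, sph_re hJ] at hre
  subst hre
  rw [zero_smul, zero_add] at h
  by_cases hc : c = 0
  · subst hc
    rw [zero_smul, add_zero] at h
    rcases smul_eq_zero.mp h with h' | h'
    · exact ⟨rfl, h', rfl⟩
    · exact absurd h' (sph_ne_zero hI)
  · exfalso
    have h3 : c • J = -(b • I) := by
      rw [add_comm] at h
      exact eq_neg_of_add_eq_zero_left h
    have hJI : J = (-(c⁻¹ * b)) • I := by
      have h4 := congrArg (fun z => (c⁻¹ : ℝ) • z) h3
      simp only [smul_smul, inv_mul_cancel₀ hc, one_smul] at h4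
      rw [h4, smul_neg, smul_smul, ← neg_smul]
    rcases sph_smul_eq hI hJ hJI with h' | h'
    · exact h1 h'
    · exact h2 h'

lemma aff_real {n : ℕ} (x : Fin n → ℝ) (I : Oct) : aff x 0 I = ofRealn x := by
  funext m
  simp [aff, ofRealn]

lemma aff_neg' {n : ℕ} (x y : Fin n → ℝ) (I : Oct) : aff x y (-I) = aff x (-y) I := by
  funext m
  simp only [aff, Pi.neg_apply, smul_neg, neg_smul]

lemma aff_inj {n : ℕ} {I : Oct} (hI : I ∈ Sph) {x y x' y' : Fin n → ℝ}
    (h : aff x y I = aff x' y' I) : x = x' ∧ y = y' := by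
  have key : ∀ m, x m = x' m ∧ y m = y' m := by
    intro m
    have e := congrFun h m
    simp only [aff] at e
    have e2 : (x m - x' m) • (1:Oct) + (y m - y' m) • I = 0 := by
      have : (x m - x' m) • (1:Oct) + (y m - y' m) • I
          = (x m • (1:Oct) + y m • I) - (x' m • (1:Oct) + y' m • I) := by module
      rw [this, e, sub_self]
    obtain ⟨h1, h2⟩ := lin2 hI e2
    exact ⟨by linarith [sub_eq_zero.mp h1], by linarith [sub_eq_zero.mp h2]⟩
  exact ⟨funext fun m => (key m).1, funext fun m => (key m).2⟩

lemma aff_eq_real {n : ℕ} {I : Oct} (hI : I ∈ Sph) {x y x' : Fin n → ℝ}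
    (h : aff x y I = ofRealn x') : x = x' ∧ y = 0 := by
  rw [← aff_real x' I] at h
  exact aff_inj hI h

lemma aff_eq_aff {n : ℕ} {I J : Oct} (hI : I ∈ Sph) (hJ : J ∈ Sph)
    (h1 : J ≠ I) (h2 : J ≠ -I) {x y x' y' : Fin n → ℝ}
    (h : aff x y I = aff x' y' J) : x = x' ∧ y = 0 ∧ y' = 0 := by
  have key : ∀ m, x m = x' m ∧ y m = 0 ∧ y' m = 0 := by
    intro m
    have e := congrFun h m
    simp only [aff] at e
    have e2 : (x m - x' m) • (1:Oct) + (y m) • I + (-(y' m)) • J = 0 := by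
      have : (x m - x' m) • (1:Oct) + (y m) • I + (-(y' m)) • J
          = (x m • (1:Oct) + y m • I) - (x' m • (1:Oct) + y' m • J) := by module
      rw [this, e, sub_self]
    obtain ⟨e1, e3, e4⟩ := lin3 hI hJ h1 h2 e2
    exact ⟨by linarith [sub_eq_zero.mp e1], e3, by linarith⟩
  exact ⟨funext fun m => (key m).1, funext fun m => (key m).2.1,
    funext fun m => (key m).2.2⟩

end OctAux
namespace OctAux

open Oct

lemma hopen_trace {n : ℕ} {Ω : Set (Fin n → Oct)} (hΩo : IsOpen[τs n] Ω)
    (K : Oct) (hK : K ∈ Sph) :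
    IsOpen ((fun p : (Fin n → ℝ) × (Fin n → ℝ) => aff p.1 p.2 K) ⁻¹' Ω) := by
  rw [τs, isOpen_iSup_iff] at hΩo
  exact isOpen_coinduced.mp (hΩo ⟨K, hK⟩)

lemma cont_aff_τ {n : ℕ} (K : Oct) (hK : K ∈ Sph) :
    @Continuous ((Fin n → ℝ) × (Fin n → ℝ)) _ _ (τs n)
      (fun p => aff p.1 p.2 K) := by
  rw [continuous_iff_coinduced_le, τs]
  exact le_iSup
    (fun I : Sph => TopologicalSpace.coinduced
      (fun p : (Fin n → ℝ) × (Fin n → ℝ) => aff p.1 p.2 I.1) inferInstance)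
    (⟨K, hK⟩ : Sph)

lemma img_preconn {n : ℕ} (K : Oct) (hK : K ∈ Sph)
    {B : Set ((Fin n → ℝ) × (Fin n → ℝ))} (hB : IsPreconnected B) :
    @IsPreconnected _ (τs n) ((fun p : (Fin n → ℝ) × (Fin n → ℝ) => aff p.1 p.2 K) '' B) := by
  letI : TopologicalSpace (Fin n → Oct) := τs n
  exact hB.image _ (cont_aff_τ K hK).continuousOn

end OctAux

/-- Every point of a slice-open set has a real-connected
slice-domain neighborhood inside the set. -/
theorem exists_realConnected_sliceDomain_nhd (n : ℕ) (hn : 1 ≤ n)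
    (Ω : Set (Fin n → Oct)) (hΩ : SliceOpen n Ω) :
    ∀ q ∈ Ω, ∃ V : Set (Fin n → Oct),
      q ∈ V ∧ V ⊆ Ω ∧ RealConnected n V ∧ SliceDomain n V := by
  obtain ⟨hΩc, hΩo⟩ := hΩ
  intro q hq
  obtain ⟨I₀, hI₀, x₀, y₀, hqe⟩ : ∃ I ∈ Sph, ∃ x y : Fin n → ℝ, q = aff x y I := by
    have := hΩc hq
    simp only [cone, Set.mem_iUnion, slicen, Set.mem_setOf_eq] at this
    obtain ⟨I, hI, x, y, h⟩ := this
    exact ⟨I, hI, x, y, h⟩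
  subst hqe
  by_cases hy : y₀ = 0
  · -- REAL CASE
    subst hy
    have hqr : aff x₀ 0 I₀ = ofRealn x₀ := OctAux.aff_real x₀ I₀
    set O : Set (Fin n → ℝ) := {x' | ofRealn x' ∈ Ω} with hOdef
    have hO : IsOpen O := by
      have hOeq : O = (fun x' : Fin n → ℝ => ((x', (0 : Fin n → ℝ)))) ⁻¹'
          ((fun p : (Fin n → ℝ) × (Fin n → ℝ) => aff p.1 p.2 I₀) ⁻¹' Ω) := by
        ext x'
        simp only [hOdef, Set.mem_setOf_eq, Set.mem_preimage, OctAux.aff_real]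
      rw [hOeq]
      exact (OctAux.hopen_trace hΩo I₀ hI₀).preimage (continuous_id.prodMk continuous_const)
    have hx₀O : x₀ ∈ O := by
      rw [hOdef, Set.mem_setOf_eq, ← hqr]; exact hq
    set T := connectedComponentIn O x₀ with hTdef
    have hTo : IsOpen T := hO.connectedComponentIn
    have hTc : IsPreconnected T := isPreconnected_connectedComponentIn
    have hx₀T : x₀ ∈ T := mem_connectedComponentIn hx₀O
    have hTO : T ⊆ O := connectedComponentIn_subset O x₀
    have hUδ : ∀ (K : Sph) (x' : T), ∃ δ > 0,
        Metric.ball (((x' : Fin n → ℝ), (0 : Fin n → ℝ))) δ ⊆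
          ((fun p : (Fin n → ℝ) × (Fin n → ℝ) => aff p.1 p.2 K.1) ⁻¹' Ω) ∩ (Prod.fst ⁻¹' T) := by
      intro K x'
      refine Metric.isOpen_iff.mp
        ((OctAux.hopen_trace hΩo K.1 K.2).inter (hTo.preimage continuous_fst)) _ ⟨?_, x'.2⟩
      show aff (x' : Fin n → ℝ) 0 K.1 ∈ Ω
      rw [OctAux.aff_real]
      exact hTO x'.2
    choose δ hδ0 hδb using hUδ
    set W : Sph → Set ((Fin n → ℝ) × (Fin n → ℝ)) :=
      fun K => ⋃ x' : T, Metric.ball (((x' : Fin n → ℝ), (0 : Fin n → ℝ))) (δ K x') with hWdef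
    have hWopen : ∀ K, IsOpen (W K) := fun K => isOpen_iUnion fun x' => Metric.isOpen_ball
    have hWfst : ∀ K p, p ∈ W K → p.1 ∈ T := by
      intro K p hp
      obtain ⟨x', hx'⟩ := Set.mem_iUnion.mp hp
      exact (hδb K x' hx').2
    have hWΩ : ∀ K p, p ∈ W K → aff p.1 p.2 K.1 ∈ Ω := by
      intro K p hp
      obtain ⟨x', hx'⟩ := Set.mem_iUnion.mp hp
      exact (hδb K x' hx').1
    have hTW : ∀ (K : Sph) (x' : Fin n → ℝ), x' ∈ T → ((x', (0 : Fin n → ℝ))) ∈ W K := by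
      intro K x' hx'
      exact Set.mem_iUnion.mpr ⟨⟨x', hx'⟩, Metric.mem_ball_self (hδ0 K ⟨x', hx'⟩)⟩
    have hWpc : ∀ K, IsPreconnected (W K) := by
      intro K
      have hWeq : W K = ⋃ x' : T,
          (Metric.ball (((x' : Fin n → ℝ), (0 : Fin n → ℝ))) (δ K x')
            ∪ (T ×ˢ ({0} : Set (Fin n → ℝ)))) := by
        apply Set.Subset.antisymm
        · exact Set.iUnion_mono fun x' => Set.subset_union_left
        · rintro p hp
          obtain ⟨x', hx'⟩ := Set.mem_iUnion.mp hp
          rcases hx' with hball | hmem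
          · exact Set.mem_iUnion.mpr ⟨x', hball⟩
          · obtain ⟨hpT, hp0⟩ := hmem
            have hpe : p = (p.1, (0 : Fin n → ℝ)) := Prod.ext rfl hp0
            rw [hpe]
            exact hTW K p.1 hpT
      rw [hWeq]
      apply isPreconnected_iUnion
      · exact ⟨((x₀, (0 : Fin n → ℝ))), Set.mem_iInter.mpr fun x' => Or.inr ⟨hx₀T, rfl⟩⟩
      · intro x'
        exact IsPreconnected.union ((x' : Fin n → ℝ), (0 : Fin n → ℝ))
          (Metric.mem_ball_self (hδ0 K x')) ⟨x'.2, rfl⟩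
          (convex_ball _ _).isPreconnected (hTc.prod isPreconnected_singleton)
    set V : Set (Fin n → Oct) :=
      ⋃ K : Sph, (fun p : (Fin n → ℝ) × (Fin n → ℝ) => aff p.1 p.2 K.1) '' W K with hVdef
    have hqV : aff x₀ 0 I₀ ∈ V :=
      Set.mem_iUnion.mpr ⟨⟨I₀, hI₀⟩, ⟨(x₀, 0), hTW _ x₀ hx₀T, rfl⟩⟩
    refine ⟨V, hqV, ?_, ?_, ?_⟩
    · rintro v hv
      obtain ⟨K, hvK⟩ := Set.mem_iUnion.mp hv
      obtain ⟨p, hp, rfl⟩ := hvK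
      exact hWΩ K p hp
    · -- RealConnected
      have hreal : {x' : Fin n → ℝ | ofRealn x' ∈ V} = T := by
        ext x'
        simp only [Set.mem_setOf_eq]
        constructor
        · intro hx'
          obtain ⟨K, hvK⟩ := Set.mem_iUnion.mp hx'
          obtain ⟨p, hp, he⟩ := hvK
          obtain ⟨h1, h2⟩ := OctAux.aff_eq_real K.2 he
          rw [← h1]
          exact hWfst K p hp
        · intro hx'
          exact Set.mem_iUnion.mpr ⟨⟨I₀, hI₀⟩, ⟨(x', 0), hTW _ x' hx', OctAux.aff_real x' I₀⟩⟩
      simp only [RealConnected]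
      rw [hreal]
      exact hTc
    · constructor
      · constructor
        · rintro v hv
          obtain ⟨K, hvK⟩ := Set.mem_iUnion.mp hv
          obtain ⟨p, hp, rfl⟩ := hvK
          exact Set.mem_biUnion K.2 ⟨p.1, p.2, rfl⟩
        · rw [τs, isOpen_iSup_iff]
          intro K₀
          rw [isOpen_coinduced]
          have hpre : (fun p : (Fin n → ℝ) × (Fin n → ℝ) => aff p.1 p.2 K₀.1) ⁻¹' V
              = W K₀ ∪ (fun p : (Fin n → ℝ) × (Fin n → ℝ) => (p.1, -p.2)) ⁻¹'
                  (W ⟨-K₀.1, OctAux.sph_neg K₀.2⟩) := by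
            ext p
            simp only [Set.mem_preimage, Set.mem_union]
            constructor
            · intro hp
              obtain ⟨K, hvK⟩ := Set.mem_iUnion.mp hp
              obtain ⟨p', hp', he⟩ := hvK
              replace he : aff p'.1 p'.2 K.1 = aff p.1 p.2 K₀.1 := he
              by_cases hK1 : K.1 = K₀.1
              · left
                have hKeq : K = K₀ := Subtype.ext hK1
                rw [hK1] at he
                obtain ⟨h1, h2⟩ := OctAux.aff_inj K₀.2 he
                have hp'' : p' ∈ W K₀ := by rw [← hKeq]; exact hp'
                have hpe : p' = p := Prod.ext h1 h2
                rwa [← hpe]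
              · by_cases hK2 : K.1 = -K₀.1
                · right
                  rw [hK2, OctAux.aff_neg'] at he
                  obtain ⟨h1, h2⟩ := OctAux.aff_inj K₀.2 he
                  have hKeq : K = (⟨-K₀.1, OctAux.sph_neg K₀.2⟩ : Sph) := Subtype.ext hK2
                  have hp'' : p' ∈ W (⟨-K₀.1, OctAux.sph_neg K₀.2⟩ : Sph) := by
                    rw [← hKeq]; exact hp'
                  have hpe : (p.1, -p.2) = p' := by
                    refine Prod.ext h1.symm ?_
                    show -p.2 = p'.2
                    rw [← h2, neg_neg]
                  rw [hpe]
                  exact hp''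
                · left
                  have hne1 : K₀.1 ≠ K.1 := fun h => hK1 h.symm
                  have hne2 : K₀.1 ≠ -K.1 := by
                    intro h
                    exact hK2 (by rw [h, neg_neg])
                  obtain ⟨h1, h2, h3⟩ := OctAux.aff_eq_aff K.2 K₀.2 hne1 hne2 he
                  have hx'T : p.1 ∈ T := by rw [← h1]; exact hWfst K p' hp'
                  have hpe : p = (p.1, (0 : Fin n → ℝ)) := Prod.ext rfl h3
                  rw [hpe]
                  exact hTW K₀ p.1 hx'T
            · rintro (hp | hp)
              · exact Set.mem_iUnion.mpr ⟨K₀, ⟨p, hp, rfl⟩⟩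
              · refine Set.mem_iUnion.mpr
                  ⟨⟨-K₀.1, OctAux.sph_neg K₀.2⟩, ⟨(p.1, -p.2), hp, ?_⟩⟩
                show aff p.1 (-p.2) (-K₀.1) = aff p.1 p.2 K₀.1
                rw [OctAux.aff_neg', neg_neg]
          rw [hpre]
          exact (hWopen K₀).union
            ((hWopen _).preimage (continuous_fst.prodMk continuous_snd.neg))
      · refine ⟨⟨aff x₀ 0 I₀, hqV⟩, ?_⟩
        rw [hVdef]
        refine @isPreconnected_iUnion _ (τs n) _ _ ?_ ?_
        · refine ⟨aff x₀ 0 I₀, Set.mem_iInter.mpr fun K => ⟨(x₀, 0), hTW K x₀ hx₀T, ?_⟩⟩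
          show aff x₀ 0 K.1 = aff x₀ 0 I₀
          rw [OctAux.aff_real, OctAux.aff_real]
        · intro K
          exact OctAux.img_preconn K.1 K.2 (hWpc K)
  · -- NONREAL CASE
    obtain ⟨m₀, hm₀⟩ := Function.ne_iff.mp hy
    have hm₀' : y₀ m₀ ≠ 0 := hm₀
    obtain ⟨r, hr0, hrb⟩ := Metric.isOpen_iff.mp (OctAux.hopen_trace hΩo I₀ hI₀) (x₀, y₀) hq
    set r' : ℝ := min r |y₀ m₀| with hr'def
    have hr'0 : 0 < r' := lt_min hr0 (abs_pos.mpr hm₀')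
    set B := Metric.ball ((x₀, y₀) : (Fin n → ℝ) × (Fin n → ℝ)) r' with hBdef
    have hBsub : B ⊆ (fun p : (Fin n → ℝ) × (Fin n → ℝ) => aff p.1 p.2 I₀) ⁻¹' Ω :=
      (Metric.ball_subset_ball (min_le_left _ _)).trans hrb
    have hB2 : ∀ p ∈ B, p.2 m₀ ≠ 0 := by
      intro p hp h0
      have h1 : dist (p.2 m₀) (y₀ m₀) ≤ dist p ((x₀, y₀) : (Fin n → ℝ) × (Fin n → ℝ)) := by
        refine le_trans (dist_le_pi_dist p.2 y₀ m₀) ?_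
        rw [Prod.dist_eq]
        exact le_max_right _ _
      rw [Metric.mem_ball] at hp
      have h2 : dist (p.2 m₀) (y₀ m₀) < |y₀ m₀| :=
        lt_of_le_of_lt h1 (lt_of_lt_of_le hp (min_le_right _ _))
      rw [h0, Real.dist_eq, zero_sub, abs_neg] at h2
      exact lt_irrefl _ h2
    set V : Set (Fin n → Oct) :=
      (fun p : (Fin n → ℝ) × (Fin n → ℝ) => aff p.1 p.2 I₀) '' B with hVdef
    have hqV : aff x₀ y₀ I₀ ∈ V := ⟨(x₀, y₀), Metric.mem_ball_self hr'0, rfl⟩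
    refine ⟨V, hqV, ?_, ?_, ?_⟩
    · rintro v ⟨p, hp, rfl⟩
      exact hBsub hp
    · -- RealConnected : empty
      have hemp : {x' : Fin n → ℝ | ofRealn x' ∈ V} = ∅ := by
        rw [Set.eq_empty_iff_forall_notMem]
        rintro x' ⟨p, hp, he⟩
        obtain ⟨-, h2⟩ := OctAux.aff_eq_real hI₀ he
        exact hB2 p hp (by rw [h2]; rfl)
      simp only [RealConnected]
      rw [hemp]
      exact isPreconnected_empty
    · constructor
      · constructor
        · rintro v ⟨p, hp, rfl⟩
          exact Set.mem_biUnion hI₀ ⟨p.1, p.2, rfl⟩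
        · rw [τs, isOpen_iSup_iff]
          intro K₀
          rw [isOpen_coinduced]
          by_cases hK1 : K₀.1 = I₀
          · have hpre : (fun p : (Fin n → ℝ) × (Fin n → ℝ) => aff p.1 p.2 K₀.1) ⁻¹' V = B := by
              rw [hK1]
              ext p
              simp only [Set.mem_preimage]
              constructor
              · rintro ⟨p', hp', he⟩
                obtain ⟨h1, h2⟩ := OctAux.aff_inj hI₀ he
                have hpe : p' = p := Prod.ext h1 h2
                rwa [← hpe]
              · intro hp
                exact ⟨p, hp, rfl⟩
            rw [hpre]
            exact Metric.isOpen_ball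
          · by_cases hK2 : K₀.1 = -I₀
            · have hpre : (fun p : (Fin n → ℝ) × (Fin n → ℝ) => aff p.1 p.2 K₀.1) ⁻¹' V
                  = (fun p : (Fin n → ℝ) × (Fin n → ℝ) => (p.1, -p.2)) ⁻¹' B := by
                rw [hK2]
                ext p
                simp only [Set.mem_preimage]
                rw [OctAux.aff_neg']
                constructor
                · rintro ⟨p', hp', he⟩
                  obtain ⟨h1, h2⟩ := OctAux.aff_inj hI₀ he
                  have hpe : p' = (p.1, -p.2) := Prod.ext h1 h2
                  rwa [← hpe]
                · intro hp
                  exact ⟨(p.1, -p.2), hp, rfl⟩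
              rw [hpre]
              exact Metric.isOpen_ball.preimage (continuous_fst.prodMk continuous_snd.neg)
            · have hpre : (fun p : (Fin n → ℝ) × (Fin n → ℝ) => aff p.1 p.2 K₀.1) ⁻¹' V = ∅ := by
                rw [Set.eq_empty_iff_forall_notMem]
                rintro p ⟨p', hp', he⟩
                obtain ⟨-, h2, -⟩ := OctAux.aff_eq_aff hI₀ K₀.2 hK1 hK2 he
                exact hB2 p' hp' (by rw [h2]; rfl)
              rw [hpre]
              exact isOpen_empty
      · refine ⟨⟨aff x₀ y₀ I₀, hqV⟩, ?_⟩
        exact OctAux.img_preconn I₀ hI₀ (convex_ball _ _).isPreconnected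
end
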